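/- Let k be a field and 0 ≤ d < n. Let B′_{d,n} = k[a_1,…,a_d, γ_{d+1},…,γ_n, c], and let F : k[a_1,…,a_{d+1}, b_1,…,b_{d+1}, γ_1,…,γ_n] → B′_{d,n} be the k-algebra homomorphism sending a_i ↦ a_{i−1} − c·a_i and b_i ↦ b_{i−1} − c·b_i for 1 ≤ i ≤ d+1, where on the right-hand side a_0 = b_0 = 0, a_{d+1} = 1 and b_1 = ⋯ = b_{d+1} = 0, so that a_{d+1} ↦ a_d − c and F(b_i) = 0 for all i; further γ_r ↦ γ_r for r > d, and γ_r ↦ −Σ_{i=r}^n γ_{i+1} v_{i−r+1,d} for 1 ≤ r ≤ d (convention γ_{n+1} = 1, and v_{i,d} taken in the variables a_1,…,a_d of B′_{d,n}). Then the ideal of B′_{d,n} generated by the elements F(b_r) for 1 ≤ r ≤ d+1 together with F(γ_r + Σ_{i=r}^n γ_{i+1} v_{i−r+1,d+1}) for 1 ≤ r ≤ d+1 (where v_{j,d+1} is formed from the variables a_1,…,a_{d+1} and then mapped by F) equals the principal ideal generated by γ_{d+1} + Σ_{i=d+1}^n γ_{i+1} Σ_{j=0}^{i−d} v_{j,d}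 c^{i−j−d}. -/

import Mathlib

open MvPolynomial

/-- The power series `1 + a_d z + a_{d-1} z^2 + ⋯ + a_1 z^d`, where the variable
`X m : MvPolynomial (Fin d) k` represents `a_{m+1}`. -/
noncomputable def Pser (k : Type) [Field k] (d : ℕ) :
    PowerSeries (MvPolynomial (Fin d) k) :=
  1 + ∑ m : Fin d, PowerSeries.monomial (d - (m : ℕ)) (X m)

/-- `vcoef k d i` is `v_{i,d}`, the `i`-th coefficient of the inverse of the
power series `1 + a_d z + ⋯ + a_1 z^d`. -/
noncomputable def vcoef (k : Type) [Field k] (d : ℕ) (i : ℕ) :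
    MvPolynomial (Fin d) k :=
  PowerSeries.coeff i ((Pser k d).invOfUnit 1)

/-- The type of variables `a_1, …, a_d, b_1, …, b_d, γ_1, …, γ_n` of the source ring. -/
abbrev WVar (d n : ℕ) : Type := (Fin d ⊕ Fin d) ⊕ Fin n

/-- `v_{i,d}` viewed in `k[a,b,γ]`. -/
noncomputable def va (k : Type) [Field k] (d n : ℕ) (i : ℕ) :
    MvPolynomial (WVar d n) k :=
  rename (fun m => Sum.inl (Sum.inl m)) (vcoef k d i)

/-- `γ_{i+1}` in the source ring, with the convention `γ_{n+1} = 1`. -/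
noncomputable def gamW (k : Type) [Field k] (d n : ℕ) (i : ℕ) :
    MvPolynomial (WVar d n) k :=
  if h : i < n then X (Sum.inr (⟨i, h⟩ : Fin n)) else 1

/-- Variables of `B'_{d,n} = k[a_1,…,a_d, γ_{d+1},…,γ_n, c]`:
`Sum.inl (Sum.inl p)` is `a_{p+1}`, `Sum.inl (Sum.inr q)` is `γ_{d+1+q}`,
`Sum.inr ()` is `c`. -/
abbrev BpVar (d n : ℕ) : Type := (Fin d ⊕ Fin (n - d)) ⊕ Unit

/-- `v_{i,d}` viewed in `B'_{d,n}`. -/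
noncomputable def vB (k : Type) [Field k] (d n : ℕ) (i : ℕ) :
    MvPolynomial (BpVar d n) k :=
  rename (fun m => Sum.inl (Sum.inl m)) (vcoef k d i)

/-- The image `F(γ_q)` in `B'_{d,n}`: `γ_q` for `d < q ≤ n` maps to the variable `γ_q`,
`γ_{n+1} = 1`, and for `q ≤ d` the image is determined (downward recursively) by
`F(γ_q) = -∑_{i=q}^n F(γ_{i+1}) v_{i-q+1,d}`, i.e. by the relation
`γ_q + ∑_{i=q}^n γ_{i+1} v_{i-q+1,d} = 0` defining `A_{d,n}`. -/
noncomputable def Fgam (k : Type) [Field k] (d n : ℕ) (q : ℕ) :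
    MvPolynomial (BpVar d n) k :=
  if hq : n < q then 1
  else if h : d < q then X (Sum.inl (Sum.inr (⟨q - d - 1, by omega⟩ : Fin (n - d))))
  else -(∑ i ∈ (Finset.Icc q n).attach,
      Fgam k d n ((i : ℕ) + 1) * vB k d n ((i : ℕ) - q + 1))
termination_by n + 1 - q
decreasing_by
  have := Finset.mem_Icc.mp i.2
  omega

/-- `a_m` in `B'_{d,n}` with conventions `a_0 = 0`, `a_{d+1} = 1`. -/
noncomputable def aBp (k : Type) [Field k] (d n : ℕ) (m : ℕ) :
    MvPolynomial (BpVar d n) k :=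
  if h : 1 ≤ m ∧ m ≤ d then X (Sum.inl (Sum.inl (⟨m - 1, by omega⟩ : Fin d)))
  else if m = d + 1 then 1 else 0

/-- The map `F : k[a_1,…,a_{d+1}, b_1,…,b_{d+1}, γ_1,…,γ_n] → B'_{d,n}`:
`a_i ↦ a_{i-1} - c·a_i` (conventions `a_0 = 0`, `a_{d+1} = 1`), `b_i ↦ 0`
(the image of `b_{i-1} - c·b_i` where all `b`'s vanish in `B'_{d,n}`),
`γ_r ↦ γ_r` for `r > d` and `γ_r ↦ -∑_{i=r}^n γ_{i+1} v_{i-r+1,d}` (recursively)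
for `r ≤ d`. -/
noncomputable def Fbig (k : Type) [Field k] (d n : ℕ) :
    MvPolynomial (WVar (d + 1) n) k →ₐ[k] MvPolynomial (BpVar d n) k :=
  aeval (fun v => match v with
    | Sum.inl (Sum.inl p) =>
        aBp k d n p - X (Sum.inr ()) * aBp k d n ((p : ℕ) + 1)
    | Sum.inl (Sum.inr _) => 0
    | Sum.inr q => Fgam k d n ((q : ℕ) + 1))

/-- `γ_{i+1}` in `B'_{d,n}` (only meaningful for `d ≤ i ≤ n`), with `γ_{n+1} = 1`. -/
noncomputable def gamBp (k : Type) [Field k] (d n : ℕ) (hdn : d < n) (i : ℕ) :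
    MvPolynomial (BpVar d n) k :=
  if h : i < n then X (Sum.inl (Sum.inr (⟨i - d, by omega⟩ : Fin (n - d)))) else 1

noncomputable def acoef (k : Type) [Field k] (D i : ℕ) : MvPolynomial (Fin D) k :=
  if h0 : i = 0 then 1 else if h : i ≤ D then X (⟨D - i, by omega⟩) else 0

lemma coeff_Pser (k : Type) [Field k] (D i : ℕ) :
    PowerSeries.coeff i (Pser k D) = acoef k D i := by
  rw [Pser, map_add, map_sum]
  simp only [PowerSeries.coeff_monomial, PowerSeries.coeff_one]
  rcases Nat.eq_zero_or_pos i with hi | hi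
  · subst hi
    rw [Finset.sum_eq_zero, acoef, dif_pos rfl, add_zero, if_pos rfl]
    intro m _
    rw [if_neg]
    have := m.isLt; omega
  · rw [acoef, dif_neg (by omega), if_neg (by omega), zero_add]
    by_cases hiD : i ≤ D
    · rw [dif_pos hiD, Finset.sum_eq_single_of_mem (⟨D - i, by omega⟩ : Fin D)
        (Finset.mem_univ _)]
      · rw [if_pos]
        simp only [Fin.val_mk]
        omega
      · intro m _ hm
        rw [if_neg]
        intro h
        apply hm
        have := m.isLt
        apply Fin.ext
        simp only [Fin.val_mk]
        omega
    · rw [dif_neg hiD, Finset.sum_eq_zero]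
      intro m _
      rw [if_neg]
      have := m.isLt; omega

lemma constantCoeff_Pser (k : Type) [Field k] (D : ℕ) :
    PowerSeries.constantCoeff (Pser k D) = 1 := by
  rw [← PowerSeries.coeff_zero_eq_constantCoeff, coeff_Pser, acoef, dif_pos rfl]

lemma map_invOfUnit {R S : Type*} [CommRing R] [CommRing S] (f : R →+* S)
    (P : PowerSeries R) (hP : PowerSeries.constantCoeff P = 1)
    (Squ : PowerSeries S) (hS : (PowerSeries.map f P) * Squ = 1) :
    PowerSeries.map f (P.invOfUnit 1) = Squ := by
  have h1 : (PowerSeries.map f P) * PowerSeries.map f (P.invOfUnit 1) = 1 := by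
    rw [← map_mul, P.mul_invOfUnit 1 (by simpa using hP), map_one]
  calc PowerSeries.map f (P.invOfUnit 1)
      = PowerSeries.map f (P.invOfUnit 1) * ((PowerSeries.map f P) * Squ) := by
        rw [hS, mul_one]
    _ = Squ * ((PowerSeries.map f P) * PowerSeries.map f (P.invOfUnit 1)) := by ring
    _ = Squ := by rw [h1, mul_one]

lemma geom_inv {R : Type*} [CommRing R] (c : R) :
    (1 - PowerSeries.C c * PowerSeries.X) * PowerSeries.mk (fun m => c ^ m) = 1 := by
  ext n
  cases n with
  | zero => simp
  | succ m =>
    rw [sub_mul, one_mul, map_sub, mul_assoc, PowerSeries.coeff_C_mul,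
        PowerSeries.coeff_succ_X_mul, PowerSeries.coeff_mk, PowerSeries.coeff_mk,
        PowerSeries.coeff_one]
    simp [pow_succ, mul_comm]

noncomputable def psiB (k : Type) [Field k] (d n : ℕ) :
    MvPolynomial (Fin d) k →ₐ[k] MvPolynomial (BpVar d n) k :=
  rename (fun m => Sum.inl (Sum.inl m))

noncomputable def phiB (k : Type) [Field k] (d n : ℕ) :
    MvPolynomial (Fin (d + 1)) k →ₐ[k] MvPolynomial (BpVar d n) k :=
  aeval (fun p : Fin (d + 1) =>
    aBp k d n (p : ℕ) - X (Sum.inr ()) * aBp k d n ((p : ℕ) + 1))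

lemma psi_acoef (k : Type) [Field k] (d n : ℕ) (i : ℕ) :
    psiB k d n (acoef k d i) = aBp k d n (d + 1 - i) := by
  rw [acoef, aBp]
  by_cases h0 : i = 0
  · subst h0
    rw [dif_pos rfl, dif_neg (by omega), if_pos (by omega), map_one]
  · rw [dif_neg h0]
    by_cases h : i ≤ d
    · rw [dif_pos h, dif_pos (by omega), psiB, rename_X]
      have : d + 1 - i - 1 = d - i := by omega
      simp [this]
    · rw [dif_neg h, map_zero, dif_neg (by omega), if_neg (by omega)]

lemma phi_acoef (k : Type) [Field k] (d n : ℕ) (i : ℕ) (hi : 1 ≤ i) :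
    phiB k d n (acoef k (d + 1) i) =
      aBp k d n (d + 1 - i) - X (Sum.inr ()) * aBp k d n (d + 2 - i) := by
  rw [acoef, dif_neg (by omega)]
  by_cases h : i ≤ d + 1
  · rw [dif_pos h, phiB, aeval_X]
    show aBp k d n (d + 1 - i) - X (Sum.inr ()) * aBp k d n ((d + 1 - i) + 1) = _
    rw [show d + 1 - i + 1 = d + 2 - i from by omega]
  · rw [dif_neg h, map_zero, aBp, aBp, dif_neg (by omega), dif_neg (by omega),
      if_neg (by omega), if_neg (by omega)]
    ring

lemma mapPhiPser (k : Type) [Field k] (d n : ℕ) :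
    PowerSeries.map (phiB k d n).toRingHom (Pser k (d + 1)) =
      (1 - PowerSeries.C (X (Sum.inr ()) : MvPolynomial (BpVar d n) k) * PowerSeries.X) *
        PowerSeries.map (psiB k d n).toRingHom (Pser k d) := by
  apply PowerSeries.ext
  intro i
  rw [PowerSeries.coeff_map, coeff_Pser, sub_mul, one_mul, map_sub, mul_assoc,
    PowerSeries.coeff_C_mul]
  cases i with
  | zero =>
    rw [acoef, dif_pos rfl, map_one]
    simp [PowerSeries.coeff_map, coeff_Pser, constantCoeff_Pser, acoef]
  | succ m =>
    rw [PowerSeries.coeff_succ_X_mul, PowerSeries.coeff_map, PowerSeries.coeff_map,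
      coeff_Pser, coeff_Pser]
    show phiB k d n _ = psiB k d n _ - X (Sum.inr ()) * psiB k d n _
    rw [phi_acoef k d n (m + 1) (by omega)]
    rw [psi_acoef, psi_acoef, show d + 2 - (m + 1) = d + 1 - m from by omega]

noncomputable def FV (k : Type) [Field k] (d n : ℕ) (j : ℕ) :
    MvPolynomial (BpVar d n) k :=
  ∑ m ∈ Finset.range (j + 1), vB k d n (j - m) * X (Sum.inr ()) ^ m

lemma vB_eq (k : Type) [Field k] (d n i : ℕ) :
    vB k d n i = psiB k d n (vcoef k d i) := rfl

lemma phi_vcoef (k : Type) [Field k] (d n : ℕ) (j : ℕ) :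
    phiB k d n (vcoef k (d + 1) j) = FV k d n j := by
  have hmap : PowerSeries.map (phiB k d n).toRingHom ((Pser k (d + 1)).invOfUnit 1) =
      PowerSeries.mk (fun m => (X (Sum.inr ()) : MvPolynomial (BpVar d n) k) ^ m) *
        PowerSeries.map (psiB k d n).toRingHom ((Pser k d).invOfUnit 1) := by
    apply map_invOfUnit _ _ (constantCoeff_Pser k (d + 1))
    rw [mapPhiPser]
    calc (1 - PowerSeries.C (X (Sum.inr ()) : MvPolynomial (BpVar d n) k) *
            PowerSeries.X) *
          PowerSeries.map (psiB k d n).toRingHom (Pser k d) *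
          (PowerSeries.mk (fun m => (X (Sum.inr ()) : MvPolynomial (BpVar d n) k) ^ m) *
            PowerSeries.map (psiB k d n).toRingHom ((Pser k d).invOfUnit 1))
        = ((1 - PowerSeries.C (X (Sum.inr ()) : MvPolynomial (BpVar d n) k) *
            PowerSeries.X) *
            PowerSeries.mk (fun m => (X (Sum.inr ()) : MvPolynomial (BpVar d n) k) ^ m)) *
          (PowerSeries.map (psiB k d n).toRingHom (Pser k d) *
            PowerSeries.map (psiB k d n).toRingHom ((Pser k d).invOfUnit 1)) := by ring
      _ = 1 := by
          rw [geom_inv, one_mul, ← map_mul,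
            (Pser k d).mul_invOfUnit 1 (by simpa using constantCoeff_Pser k d), map_one]
  have := congrArg (PowerSeries.coeff j) hmap
  rw [PowerSeries.coeff_map] at this
  show phiB k d n _ = _
  rw [show ((phiB k d n).toRingHom : MvPolynomial (Fin (d+1)) k → MvPolynomial (BpVar d n) k)
      ((PowerSeries.coeff j) ((Pser k (d+1)).invOfUnit 1)) = phiB k d n (vcoef k (d+1) j)
      from rfl] at this
  rw [this, PowerSeries.coeff_mul, Finset.Nat.sum_antidiagonal_eq_sum_range_succ_mk, FV]
  apply Finset.sum_congr rfl
  intro m _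
  rw [PowerSeries.coeff_mk, PowerSeries.coeff_map]
  rw [mul_comm]
  rfl

lemma vcoef_zero (k : Type) [Field k] (d : ℕ) : vcoef k d 0 = 1 := by
  rw [vcoef, PowerSeries.coeff_zero_eq_constantCoeff, PowerSeries.constantCoeff_invOfUnit]
  simp

lemma vB_zero (k : Type) [Field k] (d n : ℕ) : vB k d n 0 = 1 := by
  rw [vB_eq, vcoef_zero, map_one]

lemma FV_zero (k : Type) [Field k] (d n : ℕ) : FV k d n 0 = 1 := by
  rw [FV]
  simp [vB_zero]

lemma FV_succ (k : Type) [Field k] (d n j : ℕ) :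
    FV k d n (j + 1) = vB k d n (j + 1) + X (Sum.inr ()) * FV k d n j := by
  rw [FV, Finset.sum_range_succ', FV, Finset.mul_sum]
  simp only [Nat.succ_sub_succ, pow_zero, mul_one, Nat.sub_zero, pow_succ]
  rw [add_comm]
  rw [add_right_inj]
  apply Finset.sum_congr rfl
  intro m _
  ring

noncomputable def GG (k : Type) [Field k] (d n : ℕ) (r : ℕ) :
    MvPolynomial (BpVar d n) k :=
  Fgam k d n r + ∑ i ∈ Finset.Icc r n, Fgam k d n (i + 1) * FV k d n (i - r + 1)

lemma Fgam_low (k : Type) [Field k] (d n q : ℕ) (hq : q ≤ d) (hdn : d < n) :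
    Fgam k d n q =
      -(∑ i ∈ Finset.Icc q n, Fgam k d n (i + 1) * vB k d n (i - q + 1)) := by
  rw [Fgam, dif_neg (by omega), dif_neg (by omega)]
  congr 1
  exact Finset.sum_attach (Finset.Icc q n) (fun i => Fgam k d n (i + 1) * vB k d n (i - q + 1))

lemma GG_step (k : Type) [Field k] (d n r : ℕ) (_hr1 : 1 ≤ r) (hrd : r ≤ d)
    (hdn : d < n) :
    GG k d n r = X (Sum.inr ()) * GG k d n (r + 1) := by
  have key : GG k d n r =
      X (Sum.inr ()) * ∑ i ∈ Finset.Icc r n, Fgam k d n (i + 1) * FV k d n (i - r) := by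
    rw [GG, Fgam_low k d n r hrd hdn, neg_add_eq_sub, ← Finset.sum_sub_distrib,
      Finset.mul_sum]
    apply Finset.sum_congr rfl
    intro i hi
    have hmem := Finset.mem_Icc.mp hi
    have h1 : i - r + 1 = (i - r) + 1 := rfl
    rw [h1, FV_succ]
    ring
  rw [key, GG]
  congr 1
  rw [Finset.Icc_eq_cons_Ioc (by omega : r ≤ n), Finset.sum_cons, ← Finset.Icc_add_one_left_eq_Ioc,
    Nat.sub_self, FV_zero, mul_one]
  rw [add_right_inj]
  apply Finset.sum_congr rfl
  intro i hi
  have hmem := Finset.mem_Icc.mp hi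
  rw [show i - r = i - (r + 1) + 1 from by omega]

lemma Fgam_eq_gamBp (k : Type) [Field k] (d n i : ℕ) (hdn : d < n) (h1 : d + 1 ≤ i)
    (h2 : i ≤ n) : Fgam k d n (i + 1) = gamBp k d n hdn i := by
  rw [Fgam, gamBp]
  by_cases h : i < n
  · rw [dif_neg (by omega), dif_pos (by omega), dif_pos h]
    have : i + 1 - d - 1 = i - d := by omega
    simp [this]
  · rw [dif_pos (by omega), dif_neg h]

lemma FV_flip (k : Type) [Field k] (d n i : ℕ) (hdi : d ≤ i) :
    FV k d n (i - d) =
      ∑ j ∈ Finset.range (i - d + 1), vB k d n j * X (Sum.inr ()) ^ (i - j - d) := by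
  rw [← Finset.sum_range_reflect, FV]
  apply Finset.sum_congr rfl
  intro m hm
  have hm' := Finset.mem_range.mp hm
  rw [show i - d + 1 - 1 - m = i - d - m from by omega,
    show i - d - m = i - m - d from by omega,
    show i - (i - m - d) - d = m from by omega]

lemma GG_top (k : Type) [Field k] (d n : ℕ) (hdn : d < n) :
    GG k d n (d + 1) =
      (X (Sum.inl (Sum.inr (⟨0, Nat.sub_pos_of_lt hdn⟩ : Fin (n - d)))) :
          MvPolynomial (BpVar d n) k) +
        ∑ i ∈ Finset.Icc (d + 1) n,
          gamBp k d n hdn i *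
            ∑ j ∈ Finset.range (i - d + 1),
              vB k d n j * X (Sum.inr ()) ^ (i - j - d) := by
  rw [GG]
  congr 1
  · rw [Fgam, dif_neg (by omega), dif_pos (by omega)]
    have : d + 1 - d - 1 = 0 := by omega
    simp [this]
  · apply Finset.sum_congr rfl
    intro i hi
    have hmem := Finset.mem_Icc.mp hi
    rw [Fgam_eq_gamBp k d n i hdn hmem.1 hmem.2,
      show i - (d + 1) + 1 = i - d from by omega, FV_flip k d n i (by omega)]

lemma Fbig_b (k : Type) [Field k] (d n : ℕ) (p : Fin (d + 1)) :
    Fbig k d n (X (Sum.inl (Sum.inr p))) = 0 := by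
  rw [Fbig, aeval_X]

lemma Fbig_gamW (k : Type) [Field k] (d n i : ℕ) (hin : i ≤ n) :
    Fbig k d n (gamW k (d + 1) n i) = Fgam k d n (i + 1) := by
  rw [gamW]
  by_cases h : i < n
  · rw [dif_pos h, Fbig, aeval_X]
  · rw [dif_neg h, map_one, Fgam, dif_pos (by omega)]

lemma Fbig_va (k : Type) [Field k] (d n j : ℕ) :
    Fbig k d n (va k (d + 1) n j) = FV k d n j := by
  rw [va, Fbig, aeval_rename, ← phi_vcoef]
  rfl

lemma Fbig_gen (k : Type) [Field k] (d n : ℕ) (hdn : d < n) (p : Fin (d + 1)) :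
    Fbig k d n
        (X (Sum.inr (⟨(p : ℕ), lt_of_lt_of_le p.isLt hdn⟩ : Fin n)) +
          ∑ i ∈ Finset.Icc ((p : ℕ) + 1) n,
            gamW k (d + 1) n i * va k (d + 1) n (i - (p : ℕ))) =
      GG k d n ((p : ℕ) + 1) := by
  rw [map_add, map_sum, GG]
  congr 1
  · rw [Fbig, aeval_X]
  · apply Finset.sum_congr rfl
    intro i hi
    have hmem := Finset.mem_Icc.mp hi
    rw [map_mul, Fbig_gamW k d n i hmem.2, Fbig_va,
      show i - (p : ℕ) = i - ((p : ℕ) + 1) + 1 from by omega]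

lemma span_GG (k : Type) [Field k] (d n : ℕ) (hdn : d < n) :
    Ideal.span (Set.range fun p : Fin (d + 1) => GG k d n ((p : ℕ) + 1)) =
      Ideal.span {GG k d n (d + 1)} := by
  apply le_antisymm
  · rw [Ideal.span_le]
    rintro x ⟨p, rfl⟩
    have key : ∀ j : ℕ, j ≤ d → GG k d n (d + 1 - j) ∈ Ideal.span {GG k d n (d + 1)} := by
      intro j
      induction j with
      | zero => intro _; exact Ideal.subset_span rfl
      | succ m ih =>
        intro hm
        rw [show d + 1 - (m + 1) = d - m from by omega,
          GG_step k d n (d - m) (by omega) (by omega) hdn,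
          show d - m + 1 = d + 1 - m from by omega]
        exact Ideal.mul_mem_left _ _ (ih (by omega))
    have h := key (d - (p : ℕ)) (by omega)
    rw [show d + 1 - (d - (p : ℕ)) = (p : ℕ) + 1 from by have := p.isLt; omega] at h
    exact h
  · rw [Ideal.span_le, Set.singleton_subset_iff]
    exact Ideal.subset_span ⟨⟨d, by omega⟩, rfl⟩

/-- the ideal of `B'_{d,n}` generated by the `F(b_r)` (`1 ≤ r ≤ d+1`)
and the `F(γ_r + ∑_{i=r}^n γ_{i+1} v_{i-r+1,d+1})` (`1 ≤ r ≤ d+1`, `r = p+1` below)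
equals the principal ideal generated by
`w = γ_{d+1} + ∑_{i=d+1}^n γ_{i+1} ∑_{j=0}^{i-d} v_{j,d} c^{i-j-d}`. -/
theorem statement17 (k : Type) [Field k] (d n : ℕ) (hdn : d < n) :
    Ideal.span
      ((Set.range fun p : Fin (d + 1) =>
          Fbig k d n (X (Sum.inl (Sum.inr p)))) ∪
       (Set.range fun p : Fin (d + 1) =>
          Fbig k d n
            (X (Sum.inr (⟨(p : ℕ), by have := p.isLt; omega⟩ : Fin n)) +
              ∑ i ∈ Finset.Icc ((p : ℕ) + 1) n,
                gamW k (d + 1) n i * va k (d + 1) n (i - (p : ℕ))))) =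
    Ideal.span
      {(X (Sum.inl (Sum.inr (⟨0, by omega⟩ : Fin (n - d)))) :
          MvPolynomial (BpVar d n) k) +
        ∑ i ∈ Finset.Icc (d + 1) n,
          gamBp k d n hdn i *
            ∑ j ∈ Finset.range (i - d + 1),
              vB k d n j * X (Sum.inr ()) ^ (i - j - d)} := by
  rw [Ideal.span_union]
  have h0 : Ideal.span (Set.range fun p : Fin (d + 1) =>
      Fbig k d n (X (Sum.inl (Sum.inr p)))) = ⊥ := by
    rw [Ideal.span_eq_bot]
    rintro x ⟨p, rfl⟩
    exact Fbig_b k d n p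
  rw [h0, bot_sup_eq]
  have hfun : (fun p : Fin (d + 1) =>
      Fbig k d n
        (X (Sum.inr (⟨(p : ℕ), by have := p.isLt; omega⟩ : Fin n)) +
          ∑ i ∈ Finset.Icc ((p : ℕ) + 1) n,
            gamW k (d + 1) n i * va k (d + 1) n (i - (p : ℕ)))) =
      fun p : Fin (d + 1) => GG k d n ((p : ℕ) + 1) :=
    funext (Fbig_gen k d n hdn)
  rw [hfun, span_GG k d n hdn, GG_top k d n hdn]
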